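/- arXiv:cs/9906007 — 3 statements merged into one kernel-verified Lean document; each statement's English description precedes it below -/
import Mathlib

section
/- Let Δ ⊆ Σ be alphabets and let R ⊆ Σ* be a regular language such that every string of R contains exactly one occurrence of a symbol from Δ. Then R can be written as a finite union of pairwise disjoint languages of the form R_ℓ · a · R_r, where a ∈ Δ and R_ℓ, R_r ⊆ (Σ − Δ)* are regular languages. -/
/-!
Fix a DFA `M` for `R`. A word of `R` factors uniquely as `u a v` with `a ∈ Δ` and `u, v` free of
`Δ`, and `u a v ∈ R` holds exactly when `v` is accepted from the state `M.step (M.eval u) a`.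
Grouping the words by the pair `(M.eval u, a)` therefore splits `R` into the finitely many
languages `{u | M.eval u = q} · a · M.acceptsFrom (M.step q a)`, intersected with the `Δ`-free
words on both sides. Each factor is recognised by `M` with a different start or accepting set,
and unique factorisation makes the pieces pairwise disjoint.
-/

namespace List

variable {α : Type*} {p : α → Prop}

theorem exists_eq_append_cons_of_countP_eq_one [DecidablePred p] {w : List α}
    (h : w.countP (fun x => decide (p x)) = 1) :
    ∃ u a v, w = u ++ a :: v ∧ p a ∧ (∀ x ∈ u, ¬p x) ∧ ∀ x ∈ v, ¬p x := by
  cases hfind : w.find? (fun x => decide (p x)) with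
  | none =>
    rw [find?_eq_none] at hfind
    simp [countP_eq_zero.2 hfind] at h
  | some a =>
    obtain ⟨ha, u, v, rfl, hu⟩ := find?_eq_some_iff_append.1 hfind
    have hu₀ : u.countP (fun x => decide (p x)) = 0 := countP_eq_zero.2 (by simpa using hu)
    have hv₀ : v.countP (fun x => decide (p x)) = 0 := by
      simp only [countP_append, countP_cons, hu₀, ha, ↓reduceIte] at h
      omega
    exact ⟨u, a, v, rfl, of_decide_eq_true ha, by simpa using hu, by simpa using hv₀⟩

theorem append_cons_inj_of_forall_not {u u' v v' : List α} {a b : α}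
    (hu : ∀ x ∈ u, ¬p x) (hu' : ∀ x ∈ u', ¬p x) (ha : p a) (hb : p b)
    (h : u ++ a :: v = u' ++ b :: v') : u = u' ∧ a = b ∧ v = v' := by
  classical
  -- `u` is the longest prefix avoiding `p`, and `a :: v` is what remains after it.
  have prefix_eq {u v : List α} {a : α} (hu : ∀ x ∈ u, ¬p x) (ha : p a) :
      (u ++ a :: v).takeWhile (fun x => !decide (p x)) = u ∧
        (u ++ a :: v).dropWhile (fun x => !decide (p x)) = a :: v := by
    constructor
    · rw [takeWhile_append_of_pos (by simpa using hu), takeWhile_cons_of_neg (by simpa using ha),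
        append_nil]
    · rw [dropWhile_append_of_pos (by simpa using hu), dropWhile_cons_of_neg (by simpa using ha)]
  obtain ⟨htake, hdrop⟩ := prefix_eq (v := v) hu ha
  obtain ⟨htake', hdrop'⟩ := prefix_eq (v := v') hu' hb
  rw [h] at htake hdrop
  obtain ⟨rfl, rfl⟩ := cons.inj (hdrop.symm.trans hdrop')
  exact ⟨htake.symm.trans htake', rfl, rfl⟩

end List

namespace DFA

variable {α σ : Type*} (M : DFA α σ)

theorem eval_append_cons (u : List α) (a : α) (v : List α) :
    M.eval (u ++ a :: v) = M.evalFrom (M.step (M.eval u) a) v := by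
  rw [eval, evalFrom_of_append, evalFrom_cons]

theorem isRegular_acceptsFrom [Fintype σ] (s : σ) : (M.acceptsFrom s).IsRegular :=
  Language.isRegular_iff.2 ⟨σ, inferInstance, ⟨M.step, s, M.accept⟩, rfl⟩

theorem isRegular_setOf_eval_eq [Fintype σ] (q : σ) : Language.IsRegular {x | M.eval x = q} :=
  DFA.isRegular_acceptsFrom ⟨M.step, M.start, {q}⟩ M.start

end DFA

namespace Language

variable {α : Type*}

def avoiding (S : Set α) : Language α := {w | ∀ a ∈ w, a ∉ S}

theorem mem_avoiding {S : Set α} {w : List α} : w ∈ avoiding S ↔ ∀ a ∈ w, a ∉ S :=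
  Iff.rfl

theorem isRegular_avoiding (S : Set α) : (avoiding S).IsRegular := by
  classical
  let M : DFA α Bool := ⟨fun b a => b && decide (a ∉ S), true, {true}⟩
  have hM : ∀ b w, M.evalFrom b w = (b && decide (∀ a ∈ w, a ∉ S)) := by
    intro b w
    induction w generalizing b with
    | nil => simp
    | cons a w ih =>
      rw [DFA.evalFrom_cons, ih]
      simp [M, Bool.and_assoc]
  refine ⟨Bool, inferInstance, M, ?_⟩
  ext w
  rw [DFA.mem_accepts, DFA.eval, hM, mem_avoiding]
  simp [M]

theorem mem_mul_singleton_mul {L₁ L₂ : Language α} {a : α} {w : List α} :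
    w ∈ L₁ * {[a]} * L₂ ↔ ∃ u ∈ L₁, ∃ v ∈ L₂, u ++ a :: v = w := by
  simp only [mem_mul]
  constructor
  · rintro ⟨_, ⟨u, hu, _, rfl, rfl⟩, v, hv, rfl⟩
    exact ⟨u, hu, v, hv, by simp⟩
  · rintro ⟨u, hu, v, hv, rfl⟩
    exact ⟨u ++ [a], ⟨u, hu, [a], rfl, rfl⟩, v, hv, by simp⟩

theorem disjoint_mul_singleton_mul {S : Set α} {L₁ L₂ L₁' L₂' : Language α} {a b : α}
    (h₁ : L₁ ≤ avoiding S) (h₁' : L₁' ≤ avoiding S) (ha : a ∈ S) (hb : b ∈ S)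
    (hne : a ≠ b ∨ Disjoint L₁ L₁') :
    Disjoint (L₁ * {[a]} * L₂) (L₁' * {[b]} * L₂') := by
  refine Set.disjoint_left.2 fun w hw hw' => ?_
  obtain ⟨u, hu, v, -, rfl⟩ := mem_mul_singleton_mul.1 hw
  obtain ⟨u', hu', v', -, heq⟩ := mem_mul_singleton_mul.1 hw'
  obtain ⟨rfl, rfl, -⟩ :=
    List.append_cons_inj_of_forall_not (h₁ hu) (h₁' hu') ha hb heq.symm
  exact hne.elim (· rfl) fun hdisj => Set.disjoint_left.1 hdisj hu hu'

end Language

/-- **Lemma (decomposition of regular languages with a unique marked symbol).**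
Let `Δ ⊆ Σ` and let `R ⊆ Σ*` be a regular language such that every string of
`R` contains exactly one occurrence of a symbol from `Δ`.  Then `R` is a
finite union of pairwise disjoint languages of the form `R_ℓ · a · R_r` with
`a ∈ Δ` and `R_ℓ, R_r ⊆ (Σ − Δ)*` regular. -/
theorem mso_gsm_stmt_0 {σ : Type} [Fintype σ] (Δ : Set σ) [DecidablePred (· ∈ Δ)]
    (R : Language σ) (hreg : R.IsRegular)
    (hone : ∀ w ∈ R, w.countP (fun s => decide (s ∈ Δ)) = 1) :
    ∃ (I : Type) (_ : Fintype I) (a : I → σ) (Rl Rr : I → Language σ),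
      (∀ i, a i ∈ Δ) ∧
      (∀ i, (Rl i).IsRegular ∧ (Rr i).IsRegular) ∧
      (∀ i, ∀ w ∈ Rl i, ∀ s ∈ w, s ∉ Δ) ∧
      (∀ i, ∀ w ∈ Rr i, ∀ s ∈ w, s ∉ Δ) ∧
      (Pairwise fun i j =>
        Disjoint (Rl i * {[a i]} * Rr i) (Rl j * {[a j]} * Rr j)) ∧
      R = ⨆ i, Rl i * {[a i]} * Rr i := by
  obtain ⟨τ, _, M, rfl⟩ := hreg
  let Rl (i : τ × Δ) : Language σ := {u | M.eval u = i.1} ⊓ Language.avoiding Δ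
  let Rr (i : τ × Δ) : Language σ := M.acceptsFrom (M.step i.1 i.2) ⊓ Language.avoiding Δ
  refine ⟨τ × Δ, inferInstance, fun i => i.2, Rl, Rr, fun i => i.2.2,
    fun i => ⟨(M.isRegular_setOf_eval_eq _).inf (Language.isRegular_avoiding Δ),
      (M.isRegular_acceptsFrom _).inf (Language.isRegular_avoiding Δ)⟩,
    fun i w hw => hw.2, fun i w hw => hw.2, fun i j hij => ?_, ?_⟩
  · refine Language.disjoint_mul_singleton_mul inf_le_right inf_le_right i.2.2 j.2.2 ?_
    by_cases hq : i.1 = j.1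
    · exact .inl fun ha => hij (Prod.ext hq (Subtype.ext ha))
    · exact .inr (Set.disjoint_left.2 fun u hu hu' => hq (hu.1.symm.trans hu'.1))
  · ext w
    simp only [Language.mem_iSup, Language.mem_mul_singleton_mul]
    constructor
    · intro hw
      obtain ⟨u, a, v, rfl, ha, hu, hv⟩ :=
        List.exists_eq_append_cons_of_countP_eq_one (hone _ hw)
      refine ⟨(M.eval u, ⟨a, ha⟩), u, ⟨rfl, hu⟩, v, ⟨?_, hv⟩, rfl⟩
      rwa [DFA.mem_accepts, DFA.eval_append_cons] at hw
    · rintro ⟨i, u, ⟨hu, -⟩, v, ⟨hv, -⟩, rfl⟩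
      rw [DFA.mem_accepts, DFA.eval_append_cons, hu]
      exact hv
end

section
/- The relation m = { (aⁿ, w#w) | n ≥ 0, w ∈ {a,b}*, |w| = n } is not realized by any nondeterministic two-way generalized sequential machine. -/
/-- A (nondeterministic) two-way generalized sequential machine (2gsm):
finite state set, instructions read the tape symbol (input letter or one of the
two endmarkers, `Sum.inr false` = left marker, `Sum.inr true` = right marker),
and nondeterministically choose a new state, an output string and a head move
in {-1,0,+1}.  The final state has no instructions, and the overall set of
instructions is finite. -/
structure GSM2 (A B : Type) where
  Q : Type
  finQ : Fintype Q
  q0 : Q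
  qf : Q
  δ : Q → (A ⊕ Bool) → Set (Q × List B × ℤ)
  moveOK : ∀ q s t, t ∈ δ q s → t.2.2 = -1 ∨ t.2.2 = 0 ∨ t.2.2 = 1
  finalHalt : ∀ s, δ qf s = ∅
  instrFin : Set.Finite {x : Q × (A ⊕ Bool) × Q × List B × ℤ | x.2.2 ∈ δ x.1 x.2.1}

namespace GSM2

variable {A B : Type}

/-- The symbol stored at position `i` of the tape holding `⊢ w ⊣`
(positions `0, …, |w|+1`). -/
def tapeSym (w : List A) (i : ℤ) : Option (A ⊕ Bool) :=
  if i = 0 then some (Sum.inr false)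
  else if i = (w.length : ℤ) + 1 then some (Sum.inr true)
  else if 1 ≤ i ∧ i ≤ (w.length : ℤ) then (w[(i - 1).toNat]?).map Sum.inl
  else none

/-- One step of the machine on input `w`: from configuration `c` (state,
position), writing `α` to the output tape, to configuration `c'`. -/
def Step (M : GSM2 A B) (w : List A) (c : M.Q × ℤ) (α : List B) (c' : M.Q × ℤ) : Prop :=
  ∃ s, tapeSym w c.2 = some s ∧
    ∃ ε : ℤ, (c'.1, α, ε) ∈ M.δ c.1 s ∧ c'.2 = c.2 + ε ∧
      0 ≤ c'.2 ∧ c'.2 ≤ (w.length : ℤ) + 1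

/-- A computation (trace) is a sequence of configurations, each paired with
the output string produced by the step leading into it, consecutive entries
being related by `Step`. -/
def IsTrace (M : GSM2 A B) (w : List A) (tr : List ((M.Q × ℤ) × List B)) : Prop :=
  tr.Chain' (fun a b => M.Step w a.1 b.2 b.1)

/-- The total output written during a trace. -/
def output {Q : Type} (tr : List ((Q × ℤ) × List B)) : List B :=
  (tr.map (·.2)).flatten

/-- A successful (accepting) computation on input `w`: it starts in the
initial state on position 0 (with no output yet) and ends in the final state. -/
def Accepting (M : GSM2 A B) (w : List A) (tr : List ((M.Q × ℤ) × List B)) : Prop :=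
  M.IsTrace w tr ∧ tr.head? = some ((M.q0, 0), []) ∧
    ∃ c, tr.getLast? = some c ∧ c.1.1 = M.qf

/-- `M` realizes the pair `(w, z)`. -/
def Realizes (M : GSM2 A B) (w : List A) (z : List B) : Prop :=
  ∃ tr, M.Accepting w tr ∧ output tr = z

/-- `M` realizes the string transduction `m`. -/
def RealizesRel (M : GSM2 A B) (m : List A → List B → Prop) : Prop :=
  ∀ w z, M.Realizes w z ↔ m w z

/-- The number of visits a trace makes to tape position `i`. -/
def visits {Q : Type} (tr : List ((Q × ℤ) × List B)) (i : ℤ) : ℕ :=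
  tr.countP (fun c => decide (c.1.2 = i))

/-- A trace is `k`-visiting if it visits each tape position at most `k` times. -/
def KVisiting {Q : Type} (k : ℕ) (tr : List ((Q × ℤ) × List B)) : Prop :=
  ∀ i : ℤ, visits tr i ≤ k

/-- A deterministic 2gsm: in each state, on each tape symbol, at most one
instruction applies. -/
def Deterministic (M : GSM2 A B) : Prop :=
  ∀ q s, (M.δ q s).Subsingleton

/-- `M` is finite visit: for some constant `k`, every realized pair has an
accepting `k`-visiting computation. -/
def FiniteVisit (M : GSM2 A B) : Prop :=
  ∃ k, ∀ w z, M.Realizes w z →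
    ∃ tr, M.Accepting w tr ∧ output tr = z ∧ KVisiting k tr

end GSM2

/-- The transductions realized by nondeterministic 2gsm's. -/
def IsNGSM {A B : Type} (m : List A → List B → Prop) : Prop :=
  ∃ M : GSM2 A B, M.RealizesRel m

/-- The transductions realized by finite-visit nondeterministic 2gsm's. -/
def IsNGSMfin {A B : Type} (m : List A → List B → Prop) : Prop :=
  ∃ M : GSM2 A B, M.RealizesRel m ∧ M.FiniteVisit

/-- A transduction is finitary if every input has finitely many images. -/
def Finitary {A B : Type} (m : List A → List B → Prop) : Prop :=
  ∀ w, {z | m w z}.Finite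


/-!
A machine with `k` states has only `k · (n + 2)` configurations on an input of length `n`, and
the output chunks it prints in one step come from a finite set. Yet there are `2ⁿ` outputs
`w#w` with `|w| = n`; so for large `n` two distinct words `w₁ ≠ w₂` have accepting computations
that print `#` in the same step, from the same configuration and with the same chunk.
Following the first computation up to that step and the second one afterwards is an accepting
computation with output `w₁#w₂`.
-/

open Finset

lemma exists_mul_add_two_lt_two_pow (K : ℕ) : ∃ n : ℕ, K * (n + 2) < 2 ^ n := by
  refine ⟨2 * K + 8, ?_⟩
  have hK : K < 2 ^ K := Nat.lt_two_pow_self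
  have hpow : 2 ^ (2 * K + 8) = (16 * 2 ^ K) * (16 * 2 ^ K) := by
    rw [show (16 : ℕ) * 2 ^ K = 2 ^ (K + 4) by rw [pow_add]; ring, ← pow_add]
    ring_nf
  rw [hpow]
  nlinarith [Nat.mul_le_mul hK.le hK.le]

lemma List.map_some_append_none_cons_inj {α : Type*} {a b c d : List α}
    (h : a.map some ++ none :: b.map some = c.map some ++ none :: d.map some) :
    a = c ∧ b = d := by
  rw [List.append_cons_inj_of_notMem (by simp) (by simp)] at h
  exact ⟨List.map_injective_iff.2 (Option.some_injective _) h.1,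
    List.map_injective_iff.2 (Option.some_injective _) h.2.2⟩

namespace GSM2

variable {A B : Type}

instance instFintypeQ (M : GSM2 A B) : Fintype M.Q := M.finQ

section Output

variable {Q : Type}

lemma output_cons (e : (Q × ℤ) × List B) (tr : List ((Q × ℤ) × List B)) :
    output (e :: tr) = e.2 ++ output tr := by
  simp [output]

lemma output_append_cons (p s : List ((Q × ℤ) × List B)) (e : (Q × ℤ) × List B) :
    output (p ++ e :: s) = output p ++ e.2 ++ output s := by
  simp [output]

lemma exists_eq_append_cons_of_output_eq {tr : List ((Q × ℤ) × List B)} {x y : List B} {t : B}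
    (h : output tr = x ++ t :: y) :
    ∃ p e s c₁ c₂, tr = p ++ e :: s ∧ e.2 = c₁ ++ t :: c₂ ∧
      output p ++ c₁ = x ∧ c₂ ++ output s = y := by
  induction tr generalizing x with
  | nil => simp [output] at h
  | cons a tr ih =>
    rcases List.append_eq_append_iff.mp ((output_cons a tr).symm.trans h) with
      ⟨x', rfl, hx'⟩ | ⟨c, ha, hc⟩
    · obtain ⟨p, e, s, c₁, c₂, rfl, he, hp, hs⟩ := ih hx'
      exact ⟨a :: p, e, s, c₁, c₂, rfl, he, by rw [output_cons, List.append_assoc, hp], hs⟩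
    · cases c with
      | nil =>
        obtain ⟨p, e, s, c₁, c₂, rfl, he, hp, hs⟩ := ih (x := []) (by simpa using hc.symm)
        exact ⟨a :: p, e, s, c₁, c₂, rfl, he, by simp [output_cons, hp, ha], hs⟩
      | cons t' c₂ =>
        obtain ⟨rfl, rfl⟩ := List.cons_eq_cons.mp hc
        exact ⟨[], a, tr, x, c₂, rfl, ha, by simp [output], rfl⟩

end Output

variable {M : GSM2 A B} {w : List A}

/-- `[]` is included for the initial entry of a trace, which carries no output. -/
def chunks (M : GSM2 A B) : Set (List B) :=
  insert [] {α | ∃ q s q' ε, (q', α, ε) ∈ M.δ q s}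

lemma chunks_finite (M : GSM2 A B) : M.chunks.Finite := by
  refine ((M.instrFin.image fun x => x.2.2.2.1).insert []).subset ?_
  rintro α (rfl | ⟨q, s, q', ε, h⟩)
  · exact Set.mem_insert _ _
  · exact Set.mem_insert_of_mem _ ⟨(q, s, q', α, ε), h, rfl⟩

noncomputable def entries (M : GSM2 A B) (w : List A) : Finset ((M.Q × ℤ) × List B) :=
  (univ ×ˢ Icc 0 ((w.length : ℤ) + 1)) ×ˢ M.chunks_finite.toFinset

lemma mem_entries {e : (M.Q × ℤ) × List B} :
    e ∈ M.entries w ↔ 0 ≤ e.1.2 ∧ e.1.2 ≤ (w.length : ℤ) + 1 ∧ e.2 ∈ M.chunks := by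
  simp [entries, and_assoc]

lemma card_entries (M : GSM2 A B) (w : List A) :
    #(M.entries w) = Fintype.card M.Q * (w.length + 2) * #M.chunks_finite.toFinset := by
  simp only [entries, card_product, card_univ, Int.card_Icc]
  congr

lemma Step.mem_entries {c c' : M.Q × ℤ} {α : List B} (h : M.Step w c α c') :
    (c', α) ∈ M.entries w := by
  obtain ⟨s, -, ε, hδ, -, h₀, h₁⟩ := h
  exact GSM2.mem_entries.2 ⟨h₀, h₁, Set.mem_insert_of_mem _ ⟨c.1, s, c'.1, ε, hδ⟩⟩

lemma isTrace_iff {tr : List ((M.Q × ℤ) × List B)} :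
    M.IsTrace w tr ↔ tr.IsChain (fun a b => M.Step w a.1 b.2 b.1) := Iff.rfl

lemma Accepting.mem_entries {p s : List ((M.Q × ℤ) × List B)} {e : (M.Q × ℤ) × List B}
    (h : M.Accepting w (p ++ e :: s)) : e ∈ M.entries w := by
  obtain ⟨htr, hhead, -⟩ := h
  rcases p.eq_nil_or_concat with rfl | ⟨p, a, rfl⟩
  · obtain rfl : e = ((M.q0, 0), []) := by simpa using hhead
    exact GSM2.mem_entries.2 ⟨le_rfl, by dsimp; omega, Set.mem_insert _ _⟩
  · rw [isTrace_iff, List.concat_eq_append, List.append_assoc, List.singleton_append,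
      List.isChain_append_cons_cons] at htr
    exact htr.2.1.mem_entries

lemma Accepting.splice {p₁ s₁ p₂ s₂ : List ((M.Q × ℤ) × List B)} {e : (M.Q × ℤ) × List B}
    (h₁ : M.Accepting w (p₁ ++ e :: s₁)) (h₂ : M.Accepting w (p₂ ++ e :: s₂)) :
    M.Accepting w (p₁ ++ e :: s₂) := by
  obtain ⟨htr₁, hhead, -⟩ := h₁
  obtain ⟨htr₂, -, c, hc, hcf⟩ := h₂
  rw [isTrace_iff, List.isChain_split] at htr₁ htr₂
  refine ⟨isTrace_iff.2 (List.isChain_split.2 ⟨htr₁.1, htr₂.2⟩), by simpa using hhead,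
    c, by simpa using hc, hcf⟩

lemma Realizes.exists_entry {x y : List B} {t : B} (h : M.Realizes w (x ++ t :: y)) :
    ∃ e ∈ M.entries w, ∃ p s c₁ c₂, M.Accepting w (p ++ e :: s) ∧ e.2 = c₁ ++ t :: c₂ ∧
      output p ++ c₁ = x ∧ c₂ ++ output s = y := by
  obtain ⟨tr, hacc, hout⟩ := h
  obtain ⟨p, e, s, c₁, c₂, rfl, he, hp, hs⟩ := exists_eq_append_cons_of_output_eq hout
  exact ⟨e, hacc.mem_entries, p, s, c₁, c₂, hacc, he, hp, hs⟩

end GSM2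

/-- **The relation { (aⁿ, w#w) | |w| = n, w ∈ {a,b}* } is not a 2gsm
transduction.**  The input alphabet `{a}` is modelled by `Unit`; the output
alphabet `{a, b, #}` by `Option Bool` (`some false` = a, `some true` = b,
`none` = #). -/
theorem mso_gsm_stmt_1 :
    ¬ ∃ M : GSM2 Unit (Option Bool),
        M.RealizesRel (fun w z => ∃ v : List Bool,
          v.length = w.length ∧ z = v.map some ++ none :: v.map some) := by
  rintro ⟨M, hM⟩
  obtain ⟨n, hn⟩ := exists_mul_add_two_lt_two_pow (Fintype.card M.Q * #M.chunks_finite.toFinset)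
  set w := List.replicate n ()
  have hcopy (v : List.Vector Bool n) :
      M.Realizes w (v.toList.map some ++ none :: v.toList.map some) :=
    (hM _ _).2 ⟨v.toList, by simp [w], rfl⟩
  choose e he p s c₁ c₂ hacc hc hp hs using fun v => (hcopy v).exists_entry
  have hcard : #(M.entries w) < #(univ : Finset (List.Vector Bool n)) := by
    simpa [GSM2.card_entries, card_vector, w, mul_right_comm] using hn
  obtain ⟨v₁, -, v₂, -, hne, heq⟩ :=
    exists_ne_map_eq_of_card_lt_of_maps_to hcard fun v _ => he v
  have hacc₂ := hacc v₂
  have hc₂ := hc v₂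
  rw [← heq] at hacc₂ hc₂
  have hnone₁ : none ∉ c₁ v₁ := fun h => by
    simpa [hp v₁] using List.mem_append_right (GSM2.output (p v₁)) h
  have hnone₂ : none ∉ c₂ v₁ := fun h => by
    simpa [hs v₁] using List.mem_append_left (GSM2.output (s v₁)) h
  obtain ⟨-, -, hsuffix⟩ :=
    (List.append_cons_inj_of_notMem hnone₁ hnone₂).1 ((hc v₁).symm.trans hc₂)
  have hmixed : M.Realizes w (v₁.toList.map some ++ none :: v₂.toList.map some) :=
    ⟨_, (hacc v₁).splice hacc₂, by
      rw [GSM2.output_append_cons, hc v₁, ← hp v₁, hsuffix, ← hs v₂]; simp⟩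
  obtain ⟨u, -, hu⟩ := (hM _ _).1 hmixed
  obtain ⟨h₁, h₂⟩ := List.map_some_append_none_cons_inj hu
  exact hne (List.Vector.toList_injective (h₁.trans h₂.symm))
end

section
/- A string language K ⊆ Σ* is regular if and only if there is a closed monadic second-order formula φ over the edge-labelled signature (with edge predicates edge_σ for σ ∈ Σ and no node labels) such that K = { w ∈ Σ* | egr(w) ⊨ φ }, where egr(w) is the path graph with |w|+1 unlabelled nodes whose |w| consecutive edges are labelled by the symbols of w. -/
/-- Monadic second-order logic over graphs with node labels `S` and edge
labels `G`.  Node variables and node-set variables are both indexed by `ℕ`. -/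
inductive MSO (S G : Type) : Type
  | lab : S → ℕ → MSO S G
  | edge : G → ℕ → ℕ → MSO S G
  | eq : ℕ → ℕ → MSO S G
  | mem : ℕ → ℕ → MSO S G
  | not : MSO S G → MSO S G
  | and : MSO S G → MSO S G → MSO S G
  | exN : ℕ → MSO S G → MSO S G
  | exS : ℕ → MSO S G → MSO S G

/-- A finite graph with node labels `S` and edge labels `G`. -/
structure MGraph (S G : Type) where
  V : Type
  finV : Finite V
  E : Set (V × G × V)
  lab : V → S

/-- Satisfaction of an MSO formula in a graph, under a (partial) valuation of
the node variables and a valuation of the node-set variables.  (Partiality of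
node valuations caters for the empty graph.) -/
def MSO.Sat {S G : Type} (g : MGraph S G) (ν : ℕ → Option g.V) (μ : ℕ → Set g.V) :
    MSO S G → Prop
  | .lab σ x => ∃ v, ν x = some v ∧ g.lab v = σ
  | .edge γ x y => ∃ u v, ν x = some u ∧ ν y = some v ∧ (u, γ, v) ∈ g.E
  | .eq x y => ∃ v, ν x = some v ∧ ν y = some v
  | .mem x X => ∃ v, ν x = some v ∧ v ∈ μ X
  | .not φ => ¬ MSO.Sat g ν μ φ
  | .and φ ψ => MSO.Sat g ν μ φ ∧ MSO.Sat g ν μ ψ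
  | .exN x φ => ∃ v : g.V, MSO.Sat g (Function.update ν x (some v)) μ φ
  | .exS X φ => ∃ U : Set g.V, MSO.Sat g ν (Function.update μ X U) φ

/-- Free node variables of an MSO formula. -/
def MSO.freeN {S G : Type} : MSO S G → Finset ℕ
  | .lab _ x => {x}
  | .edge _ x y => {x, y}
  | .eq x y => {x, y}
  | .mem x _ => {x}
  | .not φ => φ.freeN
  | .and φ ψ => φ.freeN ∪ ψ.freeN
  | .exN x φ => φ.freeN.erase x
  | .exS _ φ => φ.freeN

/-- Free node-set variables of an MSO formula. -/
def MSO.freeS {S G : Type} : MSO S G → Finset ℕ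
  | .lab _ _ => ∅
  | .edge _ _ _ => ∅
  | .eq _ _ => ∅
  | .mem _ X => {X}
  | .not φ => φ.freeS
  | .and φ ψ => φ.freeS ∪ ψ.freeS
  | .exN _ φ => φ.freeS
  | .exS X φ => φ.freeS.erase X

/-- Satisfaction of a closed formula. -/
def SatClosed {S G : Type} (g : MGraph S G) (φ : MSO S G) : Prop :=
  φ.Sat g (fun _ => none) (fun _ => ∅)

/-- Graph isomorphism (label- and edge-preserving bijection on nodes). -/
def MGraph.Iso {S G : Type} (g h : MGraph S G) : Prop :=
  ∃ e : g.V ≃ h.V, (∀ v, h.lab (e v) = g.lab v) ∧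
    ∀ u γ v, (u, γ, v) ∈ g.E ↔ (e u, γ, e v) ∈ h.E

/-- The empty graph. -/
def MGraph.empty (S G : Type) : MGraph S G :=
  { V := Empty, finV := inferInstance, E := ∅, lab := fun v => v.elim }

/-- Valuation sending node variable `0` to `u` (all others undefined). -/
def valN {V : Type} (u : V) : ℕ → Option V :=
  fun n => if n = 0 then some u else none

/-- Valuation sending node variable `0` to `u` and `1` to `v`. -/
def valN2 {V : Type} (u v : V) : ℕ → Option V :=
  fun n => if n = 0 then some u else if n = 1 then some v else none

/-- An mso definable graph transduction with `k` parameters (set variables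
`0, …, k-1`); it is deterministic (parameterless) when `k = 0`.  It consists
of a domain formula, a finite copy set `C`, node formulas (free node variable
`0`) and edge formulas (free node variables `0`, `1`). -/
structure MSOT (S1 G1 S2 G2 : Type) where
  k : ℕ
  C : Type
  finC : Finite C
  dom : MSO S1 G1
  dom_free : dom.freeN = ∅ ∧ dom.freeS ⊆ Finset.range k
  nodeF : S2 → C → MSO S1 G1
  nodeF_free : ∀ σ c, (nodeF σ c).freeN ⊆ {0} ∧ (nodeF σ c).freeS ⊆ Finset.range k
  edgeF : G2 → C → C → MSO S1 G1
  edgeF_free : ∀ γ c d, (edgeF γ c d).freeN ⊆ {0, 1} ∧ (edgeF γ c d).freeS ⊆ Finset.range k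

/-- The output graph of an mso transduction on input `g`, for a given
valuation `μ` of the parameters: nodes are the copies `(u, c)` at which
exactly one node formula holds, labelled by that unique label, and edges are
given by the edge formulas. -/
noncomputable def MSOT.outputVal {S1 G1 S2 G2 : Type} (τ : MSOT S1 G1 S2 G2)
    (g : MGraph S1 G1) (μ : ℕ → Set g.V) : MGraph S2 G2 :=
  { V := { p : g.V × τ.C // ∃! σ : S2, (τ.nodeF σ p.2).Sat g (valN p.1) μ }
    finV := by haveI := g.finV; haveI := τ.finC; infer_instance
    E := { e | (τ.edgeF e.2.1 e.1.1.2 e.2.2.1.2).Sat g (valN2 e.1.1.1 e.2.2.1.1) μ }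
    lab := fun p => p.2.choose }

/-- The relation computed by an mso transduction: for some valuation of the
parameters (set variables `< k`) satisfying the domain formula, the output
graph is isomorphic to `h`. -/
def MSOT.Realizes {S1 G1 S2 G2 : Type} (τ : MSOT S1 G1 S2 G2)
    (g : MGraph S1 G1) (h : MGraph S2 G2) : Prop :=
  ∃ μ : ℕ → Set g.V, (∀ n, τ.k ≤ n → μ n = ∅) ∧
    τ.dom.Sat g (fun _ => none) μ ∧ MGraph.Iso (τ.outputVal g μ) h

/-- A graph `g` is in the domain of the transduction (for `k = 0`,
membership in the domain). -/
def MSOT.InDom {S1 G1 S2 G2 : Type} (τ : MSOT S1 G1 S2 G2) (g : MGraph S1 G1) : Prop :=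
  SatClosed g τ.dom

/-- The node representation `ngr w` of a string `w`: one node per position,
labelled by the corresponding symbol, with unlabelled successor edges. -/
def ngr {S : Type} (w : List S) : MGraph S Unit where
  V := Fin w.length
  finV := inferInstance
  E := { e | ∃ (i : ℕ) (h1 : i < w.length) (h2 : i + 1 < w.length),
          e = (⟨i, h1⟩, (), ⟨i + 1, h2⟩) }
  lab := w.get

/-- The edge representation `egr w` of a string `w`: `|w|+1` unlabelled
nodes, consecutive edges labelled by the symbols of `w`. -/
def egr {S : Type} (w : List S) : MGraph Unit S where
  V := Fin (w.length + 1)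
  finV := inferInstance
  E := { e | ∃ i : Fin w.length, e = (i.castSucc, w.get i, i.succ) }
  lab := fun _ => ()

/-- The nondeterministic node relabelling determined by `R ⊆ S1 × S2`
(as a relation between graphs, up to the identity of nodes). -/
def RelabelRel {S1 S2 G : Type} (R : S1 → S2 → Prop) (g : MGraph S1 G) (h : MGraph S2 G) : Prop :=
  ∃ e : g.V ≃ h.V, (∀ v, R (g.lab v) (h.lab (e v))) ∧
    ∀ u γ v, (u, γ, v) ∈ g.E ↔ (e u, γ, e v) ∈ h.E

/-- `m` is an mso definable string transduction (via the edge representation,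
deterministic/parameterless). -/
def MSOe {A B : Type} (m : List A → List B → Prop) : Prop :=
  ∃ τ : MSOT Unit A Unit B, τ.k = 0 ∧
    ∀ (g : MGraph Unit A) (h : MGraph Unit B),
      τ.Realizes g h ↔ ∃ w z, m w z ∧ MGraph.Iso g (egr w) ∧ MGraph.Iso h (egr z)

/-- `m` is a nondeterministic mso definable string transduction (via the edge
representation, with parameters). -/
def NMSOe {A B : Type} (m : List A → List B → Prop) : Prop :=
  ∃ τ : MSOT Unit A Unit B,
    ∀ (g : MGraph Unit A) (h : MGraph Unit B),
      τ.Realizes g h ↔ ∃ w z, m w z ∧ MGraph.Iso g (egr w) ∧ MGraph.Iso h (egr z)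

/-- `m` is an (ε-restricted) mso definable string transduction via the node
representation (deterministic/parameterless). -/
def MSOn {A B : Type} (m : List A → List B → Prop) : Prop :=
  ∃ τ : MSOT A Unit B Unit, τ.k = 0 ∧
    ∀ (g : MGraph A Unit) (h : MGraph B Unit),
      τ.Realizes g h ↔ ∃ w z, m w z ∧ MGraph.Iso g (ngr w) ∧ MGraph.Iso h (ngr z)

/-!
Regular languages are definable: for a DFA `M`, the formula "for all sets `X_q` (`q` a state), if
the first node lies in `X_start` and every edge `u -a→ v` with `u ∈ X_q` has `v ∈ X_(δ q a)`, then
the last node lies in some accepting `X_q`" holds in `egr w` iff `M` accepts `w`, because the run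
of `M` on `w` is the least such family.

Definable languages are regular: a valuation on `egr w` is encoded as a word with one letter per
node, recording the label of the outgoing edge and the variables pointing at the node. By induction
on `φ` there is a regular language agreeing with `φ` on encodings (and arbitrary elsewhere), so
negation is complement and conjunction is intersection. A quantifier becomes the saturation under
the letter-to-letter map erasing the quantified variable; for a node variable one first restricts
to words in which it marks exactly one node, so that the words with the same erasure as an encoding
are again encodings. Closure under letter-to-letter images and the regularity of the atomic
languages come from the Myhill–Nerode theorem.
-/

namespace Language

variable {α β : Type}

theorem isRegular_of_append_iff {p : List α → Prop} {ι : Type} [Finite ι] (s : List α → ι)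
    (F : ι → List α → Prop) (h : ∀ x y, p (x ++ y) ↔ F (s x) y) : Language.IsRegular {u | p u} :=
  .of_finite_range_leftQuotient <| (Set.finite_range fun i => ({y | F i y} : Language α)).subset <|
    Set.range_subset_iff.2 fun x => ⟨s x, Set.ext fun y => (h x y).symm⟩

theorem isRegular_exists_mem (P : α → Prop) : Language.IsRegular {u : List α | ∃ a ∈ u, P a} :=
  isRegular_of_append_iff (fun x => ∃ a ∈ x, P a) (fun p y => p ∨ ∃ a ∈ y, P a) fun x y => by
    simp [or_and_right, exists_or]

theorem isRegular_pairwise (P Q : α → Prop) :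
    Language.IsRegular {u : List α | u.Pairwise fun a b => P a → ¬ Q b} :=
  isRegular_of_append_iff (fun x => (x.Pairwise fun a b => P a → ¬ Q b, ∃ a ∈ x, P a))
    (fun p y => p.1 ∧ y.Pairwise (fun a b => P a → ¬ Q b) ∧ (p.2 → ∀ b ∈ y, ¬ Q b))
    fun x y => by simp only [List.pairwise_append]; aesop

theorem isRegular_isChain (P Q : α → Prop) :
    Language.IsRegular {u : List α | u.IsChain fun a b => P a → ¬ Q b} :=
  isRegular_of_append_iff (fun x => (x.IsChain fun a b => P a → ¬ Q b, ∃ a ∈ x.getLast?, P a))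
    (fun p y => p.1 ∧ y.IsChain (fun a b => P a → ¬ Q b) ∧ (p.2 → ∀ b ∈ y.head?, ¬ Q b))
    fun x y => by simp only [List.isChain_append]; aesop

theorem IsRegular.preimage_map (f : α → β) {L : Language β} (h : L.IsRegular) :
    Language.IsRegular (List.map f ⁻¹' L) := by
  obtain ⟨σ, _, M, rfl⟩ := h
  exact ⟨σ, inferInstance, M.comap f, M.accepts_comap f⟩

theorem leftQuotient_image_map (f : α → β) (L : Language α) (y : List β) :
    leftQuotient (List.map f '' L) y = ⋃ x ∈ {x | x.map f = y}, List.map f '' L.leftQuotient x := by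
  refine Set.ext fun z => ?_
  change (∃ v ∈ L, v.map f = y ++ z) ↔ _
  simp only [Set.mem_iUnion, List.map_eq_append_iff]
  constructor
  · rintro ⟨v, hv, x, t, rfl, rfl, rfl⟩
    exact ⟨x, rfl, t, hv, rfl⟩
  · rintro ⟨x, rfl, t, ht, rfl⟩
    exact ⟨x ++ t, ht, x, t, rfl, rfl, rfl⟩

theorem IsRegular.image_map (f : α → β) {L : Language α} (h : L.IsRegular) :
    Language.IsRegular (List.map f '' L) := by
  refine .of_finite_range_leftQuotient <| ((h.finite_range_leftQuotient.powerset).image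
    fun 𝒜 => ⋃ Q ∈ 𝒜, List.map f '' Q).subset <| Set.range_subset_iff.2 fun y => ?_
  refine ⟨L.leftQuotient '' {x | x.map f = y}, Set.image_subset_range _ _, ?_⟩
  rw [leftQuotient_image_map]
  exact Set.biUnion_image

theorem IsRegular.setOf_append_mem (z : List α) {L : Language α} (h : L.IsRegular) :
    Language.IsRegular {v | v ++ z ∈ L} := by
  obtain ⟨σ, _, M, rfl⟩ := h
  refine ⟨σ, inferInstance, ⟨M.step, M.start, {s | M.evalFrom s z ∈ M.accept}⟩, Set.ext fun v => ?_⟩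
  change M.evalFrom (M.evalFrom M.start v) z ∈ M.accept ↔ M.evalFrom M.start (v ++ z) ∈ M.accept
  rw [DFA.evalFrom_of_append]

end Language

theorem List.exists_eq_ofFn_of_map_eq {α β : Type} {f : α → β} {u : List α} {n : ℕ}
    {g : Fin n → α} (h : u.map f = (List.ofFn g).map f) :
    ∃ g' : Fin n → α, u = List.ofFn g' ∧ ∀ i, f (g' i) = f (g i) := by
  obtain rfl : u.length = n := by simpa using congrArg List.length h
  refine ⟨fun i => u[i], (List.ofFn_getElem).symm, fun i => ?_⟩
  simpa using List.getElem_of_eq h (show (i : ℕ) < (u.map f).length by simp)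

theorem mem_egr_E_iff {S : Type} {w : List S} {u v : Fin (w.length + 1)} {a : S} :
    (u, a, v) ∈ (egr w).E ↔ (u : ℕ) + 1 = v ∧ w[(u : ℕ)]? = some a := by
  constructor
  · rintro ⟨i, h⟩
    simp only [Prod.mk.injEq] at h
    obtain ⟨rfl, rfl, rfl⟩ := h
    simp
  · rintro ⟨huv, ha⟩
    obtain ⟨hu, rfl⟩ := List.getElem?_eq_some_iff.1 ha
    exact ⟨⟨u, hu⟩, by ext <;> simp [huv]⟩

theorem exists_egr_edge_into_iff {S : Type} {w : List S} {v : Fin (w.length + 1)} :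
    (∃ a, ∃ u : Fin (w.length + 1), (u, a, v) ∈ (egr w).E) ↔ v ≠ 0 := by
  simp only [mem_egr_E_iff]
  constructor
  · rintro ⟨a, u, huv, -⟩ rfl
    simp at huv
  · intro hv
    obtain ⟨k, hk⟩ := Nat.exists_eq_succ_of_ne_zero (Fin.val_ne_iff.2 hv)
    have hkw : k < w.length := by omega
    exact ⟨w[k], ⟨k, by omega⟩, hk.symm, by simp [hkw]⟩

theorem exists_egr_edge_from_iff {S : Type} {w : List S} {u : Fin (w.length + 1)} :
    (∃ a, ∃ v : Fin (w.length + 1), (u, a, v) ∈ (egr w).E) ↔ u ≠ Fin.last _ := by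
  simp only [mem_egr_E_iff, ne_eq, Fin.ext_iff, Fin.val_last]
  constructor
  · rintro ⟨a, v, huv, ha⟩
    have := (List.getElem?_eq_some_iff.1 ha).1
    omega
  · intro hu
    have hu' : (u : ℕ) < w.length := by omega
    exact ⟨w[(u : ℕ)], ⟨u + 1, by omega⟩, rfl, by simp⟩

namespace MSO

variable {S G : Type}

def bot : MSO S G := .exN 0 (.not (.eq 0 0))

def or (φ ψ : MSO S G) : MSO S G := .not (.and (.not φ) (.not ψ))

def all (x : ℕ) (φ : MSO S G) : MSO S G := .not (.exN x (.not φ))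

def bigOr (l : List (MSO S G)) : MSO S G := l.foldr .or bot

section Semantics

variable (g : MGraph S G) (ν : ℕ → Option g.V) (μ : ℕ → Set g.V)

@[simp]
theorem sat_bot : ¬ (bot : MSO S G).Sat g ν μ := by
  rintro ⟨v, hv⟩
  exact hv ⟨v, by simp⟩

@[simp]
theorem sat_or (φ ψ : MSO S G) : (φ.or ψ).Sat g ν μ ↔ φ.Sat g ν μ ∨ ψ.Sat g ν μ := by
  simp only [MSO.or, MSO.Sat]
  tauto

@[simp]
theorem sat_all (x : ℕ) (φ : MSO S G) :
    (all x φ).Sat g ν μ ↔ ∀ v, φ.Sat g (Function.update ν x (some v)) μ := by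
  simp [all, MSO.Sat]

@[simp]
theorem sat_bigOr (l : List (MSO S G)) : (bigOr l).Sat g ν μ ↔ ∃ φ ∈ l, φ.Sat g ν μ := by
  induction l with
  | nil => simp [bigOr]
  | cons φ l ih => simp [bigOr, ← ih]

theorem sat_foldr_exS (l : List ℕ) (φ : MSO S G) :
    (l.foldr .exS φ).Sat g ν μ ↔ ∃ F : ℕ → Set g.V, (∀ X ∉ l, F X = μ X) ∧ φ.Sat g ν F := by
  induction l generalizing μ with
  | nil => exact ⟨fun h => ⟨μ, fun _ _ => rfl, h⟩, fun ⟨F, hF, h⟩ => funext (hF · (by simp)) ▸ h⟩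
  | cons X l ih =>
    simp only [List.foldr_cons, MSO.Sat, ih, List.mem_cons, not_or]
    constructor
    · rintro ⟨U, F, hF, h⟩
      exact ⟨F, fun Y hY => (hF Y hY.2).trans (Function.update_of_ne hY.1 _ _), h⟩
    · rintro ⟨F, hF, h⟩
      refine ⟨F X, F, fun Y hY => ?_, h⟩
      by_cases hYX : Y = X
      · simp [hYX]
      · rw [Function.update_of_ne hYX, hF Y ⟨hYX, hY⟩]

end Semantics

@[simp]
theorem freeN_bot : (bot : MSO S G).freeN = ∅ := by
  simp [bot, MSO.freeN]

@[simp]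
theorem freeS_bot : (bot : MSO S G).freeS = ∅ := rfl

@[simp]
theorem freeN_or (φ ψ : MSO S G) : (φ.or ψ).freeN = φ.freeN ∪ ψ.freeN := rfl

@[simp]
theorem freeS_or (φ ψ : MSO S G) : (φ.or ψ).freeS = φ.freeS ∪ ψ.freeS := rfl

@[simp]
theorem freeN_all (x : ℕ) (φ : MSO S G) : (all x φ).freeN = φ.freeN.erase x := rfl

@[simp]
theorem freeS_all (x : ℕ) (φ : MSO S G) : (all x φ).freeS = φ.freeS := rfl

@[simp]
theorem mem_freeN_bigOr {l : List (MSO S G)} {x : ℕ} :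
    x ∈ (bigOr l).freeN ↔ ∃ φ ∈ l, x ∈ φ.freeN := by
  induction l with
  | nil => simp [bigOr]
  | cons φ l ih => simp [bigOr, ← ih]

@[simp]
theorem mem_freeS_bigOr {l : List (MSO S G)} {X : ℕ} :
    X ∈ (bigOr l).freeS ↔ ∃ φ ∈ l, X ∈ φ.freeS := by
  induction l with
  | nil => simp [bigOr]
  | cons φ l ih => simp [bigOr, ← ih]

@[simp]
theorem freeN_foldr_exS (l : List ℕ) (φ : MSO S G) : (l.foldr .exS φ).freeN = φ.freeN := by
  induction l with
  | nil => rfl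
  | cons X l ih => exact ih

@[simp]
theorem freeS_foldr_exS (l : List ℕ) (φ : MSO S G) :
    (l.foldr .exS φ).freeS = φ.freeS \ l.toFinset := by
  induction l with
  | nil => simp
  | cons X l ih =>
    simp only [List.foldr_cons, MSO.freeS, ih, List.toFinset_cons]
    ext Y
    simp only [Finset.mem_erase, Finset.mem_sdiff, Finset.mem_insert, List.mem_toFinset]
    tauto

end MSO

namespace MSO

@[ext]
structure AnnotatedNode (S : Type) where
  label : Option S
  nodeVars : Set ℕ
  setVars : Set ℕ

variable {S : Type}

def encodeNode (w : List S) (ν : ℕ → Option (Fin (w.length + 1)))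
    (μ : ℕ → Set (Fin (w.length + 1))) (i : Fin (w.length + 1)) : AnnotatedNode S :=
  ⟨w[(i : ℕ)]?, {x | ν x = some i}, {X | i ∈ μ X}⟩

def encode (w : List S) (ν : ℕ → Option (Fin (w.length + 1)))
    (μ : ℕ → Set (Fin (w.length + 1))) : List (AnnotatedNode S) :=
  List.ofFn (encodeNode w ν μ)

def eraseNodeVar (x : ℕ) (a : AnnotatedNode S) : AnnotatedNode S :=
  { a with nodeVars := a.nodeVars \ {x} }

def eraseSetVar (X : ℕ) (a : AnnotatedNode S) : AnnotatedNode S :=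
  { a with setVars := a.setVars \ {X} }

variable {w : List S} {ν : ℕ → Option (Fin (w.length + 1))} {μ : ℕ → Set (Fin (w.length + 1))}

theorem exists_mem_encode (P : AnnotatedNode S → Prop) :
    (∃ a ∈ encode w ν μ, P a) ↔ ∃ i, P (encodeNode w ν μ i) := by
  simp only [encode, List.mem_ofFn, exists_exists_eq_and]

theorem pairwise_encode_nodeVars (x : ℕ) :
    (encode w ν μ).Pairwise fun a b => x ∈ a.nodeVars → x ∉ b.nodeVars := by
  simp only [encode, encodeNode, List.pairwise_ofFn, Set.mem_ofPred_eq]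
  intro i j hij hi hj
  exact hij.ne (Option.some_injective _ (hi.symm.trans hj))

theorem map_eraseNodeVar_encode (x : ℕ) :
    (encode w ν μ).map (eraseNodeVar x) = encode w (Function.update ν x none) μ := by
  simp only [encode, List.map_ofFn]
  congr 1
  funext i
  refine AnnotatedNode.ext rfl (Set.ext fun y => ?_) rfl
  by_cases hy : y = x <;> simp [eraseNodeVar, encodeNode, hy]

theorem map_eraseSetVar_encode (X : ℕ) :
    (encode w ν μ).map (eraseSetVar X) = encode w ν (Function.update μ X ∅) := by
  simp only [encode, List.map_ofFn]
  congr 1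
  funext i
  refine AnnotatedNode.ext rfl rfl (Set.ext fun Y => ?_)
  by_cases hY : Y = X <;> simp [eraseSetVar, encodeNode, hY]

theorem exists_eq_encode_of_map_eraseNodeVar {x : ℕ} {u : List (AnnotatedNode S)}
    (h : u.map (eraseNodeVar x) = (encode w ν μ).map (eraseNodeVar x))
    (hex : ∃ a ∈ u, x ∈ a.nodeVars)
    (huniq : u.Pairwise fun a b => x ∈ a.nodeVars → x ∉ b.nodeVars) :
    ∃ v, u = encode w (Function.update ν x (some v)) μ := by
  obtain ⟨g, rfl, hg⟩ := List.exists_eq_ofFn_of_map_eq h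
  simp only [List.mem_ofFn, List.pairwise_ofFn] at hex huniq
  obtain ⟨_, ⟨v, rfl⟩, hv⟩ := hex
  refine ⟨v, congrArg List.ofFn (funext fun i => ?_)⟩
  have hgi := hg i
  simp only [eraseNodeVar, encodeNode, AnnotatedNode.mk.injEq] at hgi
  refine AnnotatedNode.ext hgi.1 (Set.ext fun y => ?_) hgi.2.2
  by_cases hy : y = x
  · subst hy
    simp only [encodeNode, Function.update_self, Option.some.injEq, Set.mem_ofPred_eq]
    refine ⟨fun hi => ?_, fun hvi => hvi ▸ hv⟩
    rcases lt_trichotomy v i with hlt | heq | hgt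
    · exact absurd hi (huniq hlt hv)
    · exact heq
    · exact absurd hv (huniq hgt hi)
  · simpa [encodeNode, hy] using Set.ext_iff.1 hgi.2.1 y

theorem exists_eq_encode_of_map_eraseSetVar {X : ℕ} {u : List (AnnotatedNode S)}
    (h : u.map (eraseSetVar X) = (encode w ν μ).map (eraseSetVar X)) :
    ∃ U, u = encode w ν (Function.update μ X U) := by
  obtain ⟨g, rfl, hg⟩ := List.exists_eq_ofFn_of_map_eq h
  refine ⟨{i | X ∈ (g i).setVars}, congrArg List.ofFn (funext fun i => ?_)⟩
  have hgi := hg i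
  simp only [eraseSetVar, encodeNode, AnnotatedNode.mk.injEq] at hgi
  refine AnnotatedNode.ext hgi.1 hgi.2.1 (Set.ext fun Y => ?_)
  by_cases hY : Y = X
  · subst hY
    simp [encodeNode]
  · simpa [encodeNode, hY] using Set.ext_iff.1 hgi.2.2 Y

theorem encode_none_empty (w : List S) :
    encode w (fun _ => none) (fun _ => ∅) =
      w.map (fun a => (⟨some a, ∅, ∅⟩ : AnnotatedNode S)) ++ [⟨none, ∅, ∅⟩] := by
  rw [encode, List.ofFn_succ', List.concat_eq_append]
  congr 1
  · simp only [encodeNode, Fin.val_castSucc, Fin.is_lt, getElem?_pos, reduceCtorEq,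
      Set.ofPred_false, Set.mem_empty_iff_false]
    exact List.ofFn_getElem_eq_map w fun a => (⟨some a, ∅, ∅⟩ : AnnotatedNode S)
  · simp [encodeNode]

def Represents (L : Language (AnnotatedNode S)) (φ : MSO Unit S) : Prop :=
  ∀ w ν μ, encode w ν μ ∈ L ↔ φ.Sat (egr w) ν μ

theorem represents_lab (σ : Unit) (x : ℕ) :
    Represents {u : List (AnnotatedNode S) | ∃ a ∈ u, x ∈ a.nodeVars} (.lab σ x) := fun _ _ _ =>
  (exists_mem_encode _).trans ⟨fun ⟨v, hv⟩ => ⟨v, hv, rfl⟩, fun ⟨v, hv, _⟩ => ⟨v, hv⟩⟩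

theorem represents_edge (γ : S) (x y : ℕ) :
    Represents {u | u.IsChain fun a b => x ∈ a.nodeVars ∧ a.label = some γ → y ∉ b.nodeVars}ᶜ
      (.edge γ x y) := by
  intro w ν μ
  change ¬ (encode w ν μ).IsChain _ ↔ ∃ u v, ν x = some u ∧ ν y = some v ∧ (u, γ, v) ∈ (egr w).E
  simp only [encode, List.isChain_ofFn, encodeNode, Set.mem_ofPred_eq, mem_egr_E_iff, not_forall,
    not_not]
  constructor
  · rintro ⟨i, hi, ⟨hx, hγ⟩, hy⟩
    exact ⟨_, _, hx, hy, rfl, hγ⟩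
  · rintro ⟨u, v, hx, hy, huv, hγ⟩
    refine ⟨u, huv ▸ v.isLt, ⟨hx, hγ⟩, ?_⟩
    rw [hy]
    exact congrArg some (Fin.ext huv.symm)

theorem represents_eq (x y : ℕ) :
    Represents {u : List (AnnotatedNode S) | ∃ a ∈ u, x ∈ a.nodeVars ∧ y ∈ a.nodeVars} (.eq x y) := fun _ _ _ =>
  exists_mem_encode _

theorem represents_mem (x X : ℕ) :
    Represents {u : List (AnnotatedNode S) | ∃ a ∈ u, x ∈ a.nodeVars ∧ X ∈ a.setVars} (.mem x X) := fun _ _ _ =>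
  exists_mem_encode _

variable {L L' : Language (AnnotatedNode S)} {φ ψ : MSO Unit S}

theorem Represents.not (h : Represents L φ) : Represents Lᶜ (.not φ) := fun w ν μ =>
  (h w ν μ).not

theorem Represents.and (hφ : Represents L φ) (hψ : Represents L' ψ) :
    Represents (L ⊓ L') (.and φ ψ) := fun w ν μ =>
  (hφ w ν μ).and (hψ w ν μ)

def markedOnce (x : ℕ) : Language (AnnotatedNode S) :=
  {u | (∃ a ∈ u, x ∈ a.nodeVars) ∧ u.Pairwise fun a b => x ∈ a.nodeVars → x ∉ b.nodeVars}

theorem isRegular_markedOnce (x : ℕ) : (markedOnce x : Language (AnnotatedNode S)).IsRegular :=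
  (Language.isRegular_exists_mem _).inf (Language.isRegular_pairwise _ _)

theorem Represents.exN (h : Represents L φ) (x : ℕ) :
    Represents (List.map (eraseNodeVar x) ⁻¹' (List.map (eraseNodeVar x) '' (L ⊓ markedOnce x)))
      (.exN x φ) := by
  intro w ν μ
  constructor
  · rintro ⟨u, ⟨huL, hex, huniq⟩, hu⟩
    obtain ⟨v, rfl⟩ := exists_eq_encode_of_map_eraseNodeVar hu hex huniq
    exact ⟨v, (h _ _ _).1 huL⟩
  · rintro ⟨v, hv⟩
    refine ⟨encode w (Function.update ν x (some v)) μ,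
      ⟨(h _ _ _).2 hv, (exists_mem_encode _).2 ⟨v, by simp [encodeNode]⟩,
        pairwise_encode_nodeVars x⟩, ?_⟩
    simp only [map_eraseNodeVar_encode, Function.update_idem]

theorem Represents.exS (h : Represents L φ) (X : ℕ) :
    Represents (List.map (eraseSetVar X) ⁻¹' (List.map (eraseSetVar X) '' L)) (.exS X φ) := by
  intro w ν μ
  constructor
  · rintro ⟨u, huL, hu⟩
    obtain ⟨U, rfl⟩ := exists_eq_encode_of_map_eraseSetVar hu
    exact ⟨U, (h _ _ _).1 huL⟩
  · rintro ⟨(U : Set (Fin (w.length + 1))), hU⟩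
    refine ⟨encode w ν (Function.update μ X U), (h _ _ _).2 hU, ?_⟩
    simp only [map_eraseSetVar_encode, Function.update_idem]

theorem exists_isRegular_represents (φ : MSO Unit S) : ∃ L, L.IsRegular ∧ Represents L φ := by
  induction φ with
  | lab σ x => exact ⟨_, Language.isRegular_exists_mem _, represents_lab σ x⟩
  | edge γ x y => exact ⟨_, (Language.isRegular_isChain _ _).compl, represents_edge γ x y⟩
  | eq x y => exact ⟨_, Language.isRegular_exists_mem _, represents_eq x y⟩
  | mem x X => exact ⟨_, Language.isRegular_exists_mem _, represents_mem x X⟩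
  | not φ ih =>
    obtain ⟨L, hL, h⟩ := ih
    exact ⟨_, hL.compl, h.not⟩
  | and φ ψ ihφ ihψ =>
    obtain ⟨L, hL, hφ⟩ := ihφ
    obtain ⟨L', hL', hψ⟩ := ihψ
    exact ⟨_, hL.inf hL', hφ.and hψ⟩
  | exN x φ ih =>
    obtain ⟨L, hL, h⟩ := ih
    exact ⟨_, ((hL.inf (isRegular_markedOnce x)).image_map _).preimage_map _, h.exN x⟩
  | exS X φ ih =>
    obtain ⟨L, hL, h⟩ := ih
    exact ⟨_, (hL.image_map _).preimage_map _, h.exS X⟩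

theorem isRegular_setOf_satClosed (φ : MSO Unit S) :
    Language.IsRegular {w : List S | SatClosed (egr w) φ} := by
  obtain ⟨L, hL, hφ⟩ := exists_isRegular_represents φ
  have hK : {w : List S | SatClosed (egr w) φ} =
      List.map (fun a => (⟨some a, ∅, ∅⟩ : AnnotatedNode S)) ⁻¹' {v | v ++ [⟨none, ∅, ∅⟩] ∈ L} :=
    Set.ext fun w => by
      change _ ↔ _ ++ _ ∈ L
      rw [← encode_none_empty, hφ]
      rfl
  exact hK ▸ (hL.setOf_append_mem _).preimage_map _

end MSO

namespace DFA

variable {S σ : Type} (M : DFA S σ) (w : List S)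

def IsRunClosed (Y : σ → Set (Fin (w.length + 1))) : Prop :=
  0 ∈ Y M.start ∧ ∀ (u : Fin (w.length + 1)) (a : S) (v : Fin (w.length + 1)),
    (u, a, v) ∈ (egr w).E → ∀ q, u ∈ Y q → v ∈ Y (M.step q a)

theorem eval_take_succ {i : ℕ} {a : S} (h : w[i]? = some a) :
    M.eval (w.take (i + 1)) = M.step (M.eval (w.take i)) a := by
  rw [List.take_add_one, h]
  exact M.eval_append_singleton _ _

theorem IsRunClosed.eval_take_mem {M : DFA S σ} {w : List S} {Y : σ → Set (Fin (w.length + 1))}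
    (hY : M.IsRunClosed w Y) (i : Fin (w.length + 1)) : i ∈ Y (M.eval (w.take i)) := by
  induction i using Fin.induction with
  | zero => exact hY.1
  | succ i ih =>
    have ha : w[(i : ℕ)]? = some w[(i : ℕ)] := by simp
    have hedge : (i.castSucc, w[(i : ℕ)], i.succ) ∈ (egr w).E := mem_egr_E_iff.2 ⟨rfl, ha⟩
    simpa [M.eval_take_succ w ha] using hY.2 _ _ _ hedge _ ih

theorem mem_accepts_iff_forall_isRunClosed :
    w ∈ M.accepts ↔ ∀ Y, M.IsRunClosed w Y → ∃ q ∈ M.accept, Fin.last _ ∈ Y q := by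
  constructor
  · intro hw Y hY
    exact ⟨M.eval w, hw, by simpa using hY.eval_take_mem (Fin.last _)⟩
  · intro h
    have hrun : M.IsRunClosed w fun q => {i | M.eval (w.take i) = q} := by
      refine ⟨rfl, fun u a v huv q hu => ?_⟩
      obtain ⟨huv, ha⟩ := mem_egr_E_iff.1 huv
      change M.eval _ = _ at hu ⊢
      rw [← huv, M.eval_take_succ w ha, hu]
    obtain ⟨q, hq, hlast⟩ := h _ hrun
    change M.eval _ = _ at hlast
    simp only [Fin.val_last, List.take_length] at hlast
    rwa [DFA.mem_accepts, hlast]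

end DFA

namespace MSO

section Edges

variable {S G : Type} [Fintype G]

noncomputable def hasIncoming : MSO S G :=
  bigOr (Finset.univ.toList.map fun a => .exN 1 (.edge a 1 0))

noncomputable def hasOutgoing : MSO S G :=
  bigOr (Finset.univ.toList.map fun a => .exN 1 (.edge a 0 1))

variable (g : MGraph S G) (ν : ℕ → Option g.V) (μ : ℕ → Set g.V) (v : g.V)

@[simp]
theorem sat_hasIncoming :
    (hasIncoming : MSO S G).Sat g (Function.update ν 0 (some v)) μ ↔ ∃ a u, (u, a, v) ∈ g.E := by
  simp [hasIncoming, MSO.Sat]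

@[simp]
theorem sat_hasOutgoing :
    (hasOutgoing : MSO S G).Sat g (Function.update ν 0 (some v)) μ ↔ ∃ a u, (v, a, u) ∈ g.E := by
  simp [hasOutgoing, MSO.Sat]

end Edges

section Automaton

variable {S σ : Type} [Fintype S] [Fintype σ] (M : DFA S σ) (X : σ → ℕ)

noncomputable def runClosed : MSO Unit S :=
  .and (all 0 (hasIncoming.or (.mem 0 (X M.start))))
    (.not (.exN 0 (.exN 1 (bigOr ((Finset.univ : Finset (σ × S)).toList.map fun p =>
      .and (.and (.edge p.2 0 1) (.mem 0 (X p.1))) (.not (.mem 1 (X (M.step p.1 p.2)))))))))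

open Classical in
noncomputable def lastAccepting : MSO Unit S :=
  all 0 (hasOutgoing.or (bigOr ((Finset.univ.filter (· ∈ M.accept)).toList.map fun q => .mem 0 (X q))))

variable {w : List S} (ν : ℕ → Option (egr w).V) (F : ℕ → Set (egr w).V)

theorem sat_runClosed : (runClosed M X).Sat (egr w) ν F ↔ M.IsRunClosed w (F ∘ X) := by
  simp only [runClosed, MSO.Sat, sat_all, sat_or, sat_hasIncoming, Function.update_self,
    Option.some.injEq, exists_eq_left', sat_bigOr, List.mem_map, Finset.mem_toList,
    Finset.mem_univ, true_and, Prod.exists, exists_exists_exists_and_eq, ne_eq, zero_ne_one,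
    not_false_eq_true, Function.update_of_ne, exists_and_left, not_exists, not_and,
    not_not, and_imp, DFA.IsRunClosed]
  refine and_congr ⟨fun h => (h (0 : Fin (w.length + 1))).resolve_left
    fun he => exists_egr_edge_into_iff.1 he rfl, fun h v => ?_⟩
    ⟨fun h u a v huv q hu => h u v q a huv hu, fun h u v q a huv hu => h u a v huv q hu⟩
  by_cases hv : v = (0 : Fin (w.length + 1))
  · exact .inr (hv ▸ h)
  · exact .inl (exists_egr_edge_into_iff.2 hv)

theorem sat_lastAccepting :
    (lastAccepting M X).Sat (egr w) ν F ↔ ∃ q ∈ M.accept, Fin.last _ ∈ F (X q) := by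
  simp only [lastAccepting, sat_all, sat_or, sat_hasOutgoing, sat_bigOr, List.mem_map,
    Finset.mem_toList, Finset.mem_filter, Finset.mem_univ, true_and, exists_exists_and_eq_and,
    MSO.Sat, Function.update_self, Option.some.injEq, exists_eq_left']
  refine ⟨fun h => (h (Fin.last _)).resolve_left fun he => exists_egr_edge_from_iff.1 he rfl,
    fun h v => ?_⟩
  by_cases hv : v = Fin.last _
  · exact .inr (hv ▸ h)
  · exact .inl (exists_egr_edge_from_iff.2 hv)

noncomputable def stateVar (q : σ) : ℕ := Fintype.equivFin σ q

theorem stateVar_injective : Function.Injective (stateVar : σ → ℕ) :=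
  fun _ _ h => (Fintype.equivFin σ).injective (Fin.ext h)

noncomputable def ofDFA : MSO Unit S :=
  .not (((Finset.univ : Finset σ).toList.map stateVar).foldr .exS
    (.and (runClosed M stateVar) (.not (lastAccepting M stateVar))))

theorem satClosed_ofDFA (w : List S) : SatClosed (egr w) (ofDFA M) ↔ w ∈ M.accepts := by
  simp only [SatClosed, ofDFA, MSO.Sat, sat_foldr_exS, sat_runClosed, sat_lastAccepting,
    M.mem_accepts_iff_forall_isRunClosed]
  constructor
  · intro h Y hY
    by_contra hacc
    let Y' : σ → Set (egr w).V := Y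
    have hext (q : σ) : Function.extend stateVar Y' (fun _ => ∅) (stateVar q) = Y q :=
      stateVar_injective.extend_apply _ _ q
    refine h ⟨Function.extend stateVar Y' fun _ => ∅, fun X hX => Function.extend_apply' _ _ _ ?_,
      by convert hY using 1; exact funext hext, fun ⟨q, hq, hl⟩ => hacc ⟨q, hq, hext q ▸ hl⟩⟩
    rintro ⟨q, rfl⟩
    exact hX (by simp)
  · rintro h ⟨F, -, hF, hacc⟩
    exact hacc (h _ hF)

theorem freeN_ofDFA : (ofDFA M).freeN = ∅ := by
  aesop (add norm simp [ofDFA, runClosed, lastAccepting, hasIncoming, hasOutgoing, MSO.freeN,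
    Finset.eq_empty_iff_forall_notMem])

theorem freeS_ofDFA : (ofDFA M).freeS = ∅ := by
  aesop (add norm simp [ofDFA, runClosed, lastAccepting, hasIncoming, hasOutgoing, MSO.freeS,
    Finset.eq_empty_iff_forall_notMem])

end Automaton

end MSO

/-- **Büchi–Elgot theorem, edge representation**: a string language
`K ⊆ Σ*` is regular iff there is a closed mso formula `φ` over the
edge-labelled signature such that `K = { w | egr w ⊨ φ }`. -/
theorem mso_gsm_stmt_7 {S : Type} [Fintype S] (K : Language S) :
    K.IsRegular ↔
      ∃ φ : MSO Unit S, φ.freeN = ∅ ∧ φ.freeS = ∅ ∧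
        ∀ w : List S, w ∈ K ↔ SatClosed (egr w) φ := by
  constructor
  · rintro ⟨σ, _, M, rfl⟩
    exact ⟨MSO.ofDFA M, MSO.freeN_ofDFA M, MSO.freeS_ofDFA M,
      fun w => (MSO.satClosed_ofDFA M w).symm⟩
  · rintro ⟨φ, -, -, hφ⟩
    have hK : K = {w | SatClosed (egr w) φ} := Set.ext hφ
    exact hK ▸ MSO.isRegular_setOf_satClosed φ
end
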